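/- arXiv:2108.08778 — 2 statements merged into one kernel-verified Lean document; each statement's English description precedes it below -/
import Mathlib

section
/- Under the hypotheses ξ_{ν+1} ≤ η_{μ+d−1}, q_{ν+2} = r_{μ+d}, and q_{ν+1} ≤ r_{μ+d−1}, the complete quotients satisfy β_{μ+d+1} ≥ α_{ν+3}; and the inequality is strict if q_{ν+1} < r_{μ+d−1}. -/
/-- Complete quotients of the continued fraction of `α`:
`cq α 0 = α`, `cq α (n+1) = 1 / fract (cq α n)`. -/
noncomputable def cq (α : ℝ) : ℕ → ℝ
  | 0 => α
  | n + 1 => 1 / Int.fract (cq α n)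

/-- Partial quotients `a_n` of the continued fraction of `α`. -/
noncomputable def pq (α : ℝ) (n : ℕ) : ℤ := ⌊cq α n⌋

/-- Convergent numerators `p_n`. -/
noncomputable def cnum (α : ℝ) : ℕ → ℤ
  | 0 => pq α 0
  | 1 => pq α 1 * pq α 0 + 1
  | n + 2 => pq α (n + 2) * cnum α (n + 1) + cnum α n

/-- Convergent denominators `q_n`. -/
noncomputable def cden (α : ℝ) : ℕ → ℤ
  | 0 => 1
  | 1 => pq α 1
  | n + 2 => pq α (n + 2) * cden α (n + 1) + cden α n

/-- Approximation errors `ξ_n = |q_n α - p_n|`. -/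
noncomputable def xi (α : ℝ) (n : ℕ) : ℝ := |(cden α n : ℝ) * α - (cnum α n : ℝ)|

/-- Value of the finite continued fraction `[c₁; c₂, ..., c_k]` (empty list gives `0`). -/
noncomputable def cfval : List ℝ → ℝ
  | [] => 0
  | c :: l => c + 1 / cfval l

/-- Reversed quotient `α*_n = [0; a_n, a_{n-1}, ..., a_1]`. -/
noncomputable def revq (α : ℝ) (n : ℕ) : ℝ :=
  1 / cfval ((List.range n).map fun i => (pq α (n - i) : ℝ))

/-- Distance of a real number to the nearest integer. -/
noncomputable def distZ (x : ℝ) : ℝ := |x - round x|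

/-- Irrationality measure function `ψ_α(t) = min_{q ∈ ℤ₊, q ≤ t} ‖qα‖`. -/
noncomputable def psi (α : ℝ) (t : ℝ) : ℝ :=
  sInf {v : ℝ | ∃ q : ℕ, 0 < q ∧ (q : ℝ) ≤ t ∧ v = distZ ((q : ℝ) * α)}

/-- Continuant `⟨c₁, ..., c_k⟩` (empty continuant equals `1`). -/
def contnt : List ℤ → ℤ
  | [] => 1
  | [c] => c
  | c :: c' :: l => c * contnt (c' :: l) + contnt l

/-- The `k`-index: the number of orderings (permutations) of the `ψ`-functions
that occur for arbitrarily large `t`. -/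
noncomputable def kIndex {n : ℕ} (α : Fin n → ℝ) : ℕ :=
  Set.ncard {σ : Equiv.Perm (Fin n) |
    ∀ T : ℝ, ∃ t : ℝ, T < t ∧ ∀ i j : Fin n, i < j →
      psi (α (σ j)) t < psi (α (σ i)) t}

lemma cq_irrational {α : ℝ} (hα : Irrational α) : ∀ n, Irrational (cq α n)
  | 0 => hα
  | n + 1 => by
    have ih := cq_irrational hα n
    have : Irrational (Int.fract (cq α n)) := by
      rw [← Int.self_sub_floor]
      exact ih.sub_intCast _
    rw [cq, one_div]
    exact this.inv

lemma fract_cq_pos {α : ℝ} (hα : Irrational α) (n : ℕ) : 0 < Int.fract (cq α n) := by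
  rw [Int.fract_pos]
  exact (cq_irrational hα n).ne_int _

lemma cq_succ_gt_one {α : ℝ} (hα : Irrational α) (n : ℕ) : 1 < cq α (n + 1) := by
  rw [cq]
  rw [lt_div_iff₀ (fract_cq_pos hα n), one_mul]
  exact Int.fract_lt_one _

lemma cq_succ_pos {α : ℝ} (hα : Irrational α) (n : ℕ) : 0 < cq α (n + 1) :=
  lt_trans one_pos (cq_succ_gt_one hα n)

lemma cq_rec {α : ℝ} (hα : Irrational α) (n : ℕ) :
    cq α n = (pq α n : ℝ) + 1 / cq α (n + 1) := by
  have h := fract_cq_pos hα n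
  rw [cq, one_div_one_div, pq]
  exact (Int.floor_add_fract _).symm

lemma pq_succ_pos {α : ℝ} (hα : Irrational α) (n : ℕ) : 1 ≤ pq α (n + 1) := by
  have := cq_succ_gt_one hα n
  rw [pq]
  exact Int.le_floor.2 (by exact_mod_cast this.le)

lemma cden_pos {α : ℝ} (hα : Irrational α) : ∀ n, 1 ≤ cden α n
  | 0 => le_refl _
  | 1 => pq_succ_pos hα 0
  | n + 2 => by
    have h1 := cden_pos hα (n + 1)
    have h2 := cden_pos hα n
    have h3 := pq_succ_pos hα (n + 1)
    rw [cden]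
    nlinarith

lemma cq_rec' {α : ℝ} (hα : Irrational α) (n : ℕ) :
    cq α n * cq α (n + 1) = (pq α n : ℝ) * cq α (n + 1) + 1 := by
  have hne : cq α (n + 1) ≠ 0 := (cq_succ_pos hα n).ne'
  rw [cq_rec hα n]
  field_simp

lemma key_formula {α : ℝ} (hα : Irrational α) : ∀ n : ℕ,
    ((cden α (n + 1) : ℝ) * cq α (n + 2) + cden α n) * α
      = (cnum α (n + 1) : ℝ) * cq α (n + 2) + cnum α n
  | 0 => by
    have h0 := cq_rec' hα 0
    rw [show cq α 0 = α from rfl] at h0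
    have h1 : cq α 1 * cq α 2 = (pq α 1 : ℝ) * cq α 2 + 1 := cq_rec' hα 1
    have hne1 : cq α 1 ≠ 0 := (cq_succ_pos hα 0).ne'
    rw [show cden α 1 = pq α 1 from rfl, show cden α 0 = 1 from rfl,
      show cnum α 1 = pq α 1 * pq α 0 + 1 from rfl, show cnum α 0 = pq α 0 from rfl]
    push_cast
    apply mul_left_cancel₀ hne1
    linear_combination ((pq α 1 : ℝ) * cq α 2 + 1) * h0 - h1
  | n + 1 => by
    have ih := key_formula hα n
    have hrec : cq α (n + 2) * cq α (n + 3) = (pq α (n + 2) : ℝ) * cq α (n + 3) + 1 :=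
      cq_rec' hα (n + 2)
    rw [show cden α (n + 2) = pq α (n + 2) * cden α (n + 1) + cden α n from rfl,
      show cnum α (n + 2) = pq α (n + 2) * cnum α (n + 1) + cnum α n from rfl]
    push_cast
    linear_combination cq α (n + 3) * ih
      - ((cden α (n + 1) : ℝ) * α - (cnum α (n + 1) : ℝ)) * hrec

lemma det_formula (α : ℝ) : ∀ n : ℕ,
    cnum α (n + 1) * cden α n - cnum α n * cden α (n + 1) = (-1) ^ n
  | 0 => by
    rw [show cnum α 1 = pq α 1 * pq α 0 + 1 from rfl, show cden α 0 = 1 from rfl,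
      show cnum α 0 = pq α 0 from rfl, show cden α 1 = pq α 1 from rfl]
    ring
  | n + 1 => by
    have ih := det_formula α n
    rw [show cnum α (n + 2) = pq α (n + 2) * cnum α (n + 1) + cnum α n from rfl,
      show cden α (n + 2) = pq α (n + 2) * cden α (n + 1) + cden α n from rfl]
    linear_combination (-1 : ℤ) * ih

lemma xi_succ_formula {α : ℝ} (hα : Irrational α) (n : ℕ) :
    xi α (n + 1) = 1 / ((cden α (n + 1) : ℝ) * cq α (n + 2) + cden α n) := by
  have hq1 : (1 : ℝ) ≤ (cden α (n + 1) : ℝ) := by exact_mod_cast cden_pos hα (n + 1)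
  have hq0 : (1 : ℝ) ≤ (cden α n : ℝ) := by exact_mod_cast cden_pos hα n
  have hx : 1 < cq α (n + 2) := cq_succ_gt_one hα (n + 1)
  have hD : 0 < (cden α (n + 1) : ℝ) * cq α (n + 2) + cden α n := by nlinarith
  have hdet : ((cnum α (n + 1) : ℝ) * cden α n - cnum α n * cden α (n + 1)) = (-1) ^ n := by
    exact_mod_cast congrArg (fun z : ℤ => (z : ℝ)) (det_formula α n)
  have key := key_formula hα n
  have hmain : (cden α (n + 1) : ℝ) * α - cnum α (n + 1)
      = (-1) ^ (n + 1) / ((cden α (n + 1) : ℝ) * cq α (n + 2) + cden α n) := by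
    rw [eq_div_iff hD.ne']
    linear_combination (cden α (n + 1) : ℝ) * key - hdet
  rw [xi, hmain, abs_div, abs_pow, abs_neg, abs_one, one_pow, abs_of_pos hD]

lemma xi_eq {α : ℝ} (hα : Irrational α) (n : ℕ) :
    xi α n = 1 / ((cden α (n + 1) : ℝ) + (cden α n : ℝ) / cq α (n + 2)) := by
  cases n with
  | zero =>
    have h1 : cq α 1 = (pq α 1 : ℝ) + 1 / cq α 2 := cq_rec hα 1
    have hf : 0 < Int.fract α := fract_cq_pos hα 0
    have hx0 : xi α 0 = Int.fract α := by
      rw [xi, show cden α 0 = 1 from rfl, show cnum α 0 = pq α 0 from rfl,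
        show pq α 0 = ⌊α⌋ from rfl, Int.cast_one, one_mul, ← Int.self_sub_floor]
      exact abs_of_pos (by rw [Int.self_sub_floor]; exact hf)
    rw [hx0, show (cden α 1 : ℝ) = (pq α 1 : ℝ) from rfl,
      show ((cden α 0 : ℤ) : ℝ) = 1 from by norm_num [show cden α 0 = 1 from rfl],
      one_div, ← h1, show cq α 1 = 1 / Int.fract α from rfl]
    rw [one_div, inv_inv]
  | succ m =>
    rw [xi_succ_formula hα m]
    congr 1
    have hrec : cq α (m + 2) = (pq α (m + 2) : ℝ) + 1 / cq α (m + 3) := cq_rec hα (m + 2)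
    rw [show cden α (m + 2) = pq α (m + 2) * cden α (m + 1) + cden α m from rfl, hrec]
    push_cast
    ring

theorem stmt8 (α β : ℝ) (hα : Irrational α) (hβ : Irrational β)
    (ν μ d : ℕ) (hd : 1 ≤ d)
    (h2 : xi α (ν + 1) ≤ xi β (μ + d - 1))
    (h4 : cden α (ν + 2) = cden β (μ + d))
    (h5 : cden α (ν + 1) ≤ cden β (μ + d - 1)) :
    cq α (ν + 3) ≤ cq β (μ + d + 1) ∧
    (cden α (ν + 1) < cden β (μ + d - 1) → cq α (ν + 3) < cq β (μ + d + 1)) := by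
  obtain ⟨c, rfl⟩ : ∃ c, d = c + 1 := ⟨d - 1, by omega⟩
  set e := μ + c with he
  have hμd1 : μ + (c + 1) - 1 = e := by omega
  have hμd : μ + (c + 1) = e + 1 := by omega
  have hμd2 : μ + (c + 1) + 1 = e + 2 := by omega
  rw [hμd1] at h2 h5
  rw [hμd] at h4
  rw [hμd2]
  rw [xi_eq hα (ν + 1), xi_eq hβ e] at h2
  have hA : 1 < cq α (ν + 3) := cq_succ_gt_one hα (ν + 2)
  have hB : 1 < cq β (e + 2) := cq_succ_gt_one hβ (e + 1)
  have hA0 : 0 < cq α (ν + 3) := by linarith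
  have hB0 : 0 < cq β (e + 2) := by linarith
  have hq2 : (1 : ℝ) ≤ (cden α (ν + 2) : ℝ) := by exact_mod_cast cden_pos hα (ν + 2)
  have hq1 : (1 : ℝ) ≤ (cden α (ν + 1) : ℝ) := by exact_mod_cast cden_pos hα (ν + 1)
  have hr1 : (1 : ℝ) ≤ (cden β (e + 1) : ℝ) := by exact_mod_cast cden_pos hβ (e + 1)
  have hr0 : (1 : ℝ) ≤ (cden β e : ℝ) := by exact_mod_cast cden_pos hβ e
  have hDβ : 0 < (cden β (e + 1) : ℝ) + (cden β e : ℝ) / cq β (e + 2) := by positivity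
  have hD : (cden β (e + 1) : ℝ) + (cden β e : ℝ) / cq β (e + 2)
      ≤ (cden α (ν + 2) : ℝ) + (cden α (ν + 1) : ℝ) / cq α (ν + 3) := by
    have hDα : 0 < (cden α (ν + 1 + 1) : ℝ) + (cden α (ν + 1) : ℝ) / cq α (ν + 1 + 2) := by
      have : 0 < cq α (ν + 1 + 2) := cq_succ_pos hα (ν + 2)
      positivity
    have := le_of_one_div_le_one_div hDα h2
    convert this using 3 <;> norm_num
  have h4' : (cden α (ν + 2) : ℝ) = (cden β (e + 1) : ℝ) := by exact_mod_cast h4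
  have hkey : (cden β e : ℝ) / cq β (e + 2) ≤ (cden α (ν + 1) : ℝ) / cq α (ν + 3) := by
    linarith [hD, h4'.le]
  have h5' : (cden α (ν + 1) : ℝ) ≤ (cden β e : ℝ) := by exact_mod_cast h5
  have hq1' : (0 : ℝ) < (cden α (ν + 1) : ℝ) := by linarith
  constructor
  · have t1 : (cden α (ν + 1) : ℝ) / cq β (e + 2) ≤ (cden β e : ℝ) / cq β (e + 2) := by
      gcongr
    have t2 := (div_le_div_iff₀ hB0 hA0).1 (le_trans t1 hkey)
    exact le_of_mul_le_mul_left t2 hq1'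
  · intro hlt
    have hlt' : (cden α (ν + 1) : ℝ) < (cden β e : ℝ) := by exact_mod_cast hlt
    have t1 : (cden α (ν + 1) : ℝ) / cq β (e + 2) < (cden β e : ℝ) / cq β (e + 2) := by
      gcongr
    have t2 := (div_lt_div_iff₀ hB0 hA0).1 (lt_of_lt_of_le t1 hkey)
    exact lt_of_mul_lt_mul_left t2 hq1'.le
end

section
/- If α and β are irrational numbers such that for infinitely many pairs of indices (μ, ν) the reversed quotients satisfy α*_μ = β*_ν (equivalently, the initial strings of partial quotients of α and β reversed coincide: (a_μ, a_{μ−1}, ..., a₁) = (b_ν, b_{ν−1}, ..., b₁) for infinitely many μ), then α + β ∈ ℤ or α − β ∈ ℤ. -/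
/-!
Unwinding `1 / (a + r) = 1 / (b + s)` with integers `a, b ≥ 1` and `r, s ∈ [0, 1]` one partial
quotient at a time shows that `α*_μ = β*_ν` forces `a₁, …, a_μ` and `b₁, …, b_ν` to coincide, up to
the one ambiguity of finite continued fractions, `[…, c, 1] = […, c + 1]`. Infinitely many such
pairs therefore give either `aᵢ = bᵢ` for all `i ≥ 1`, or `a₁ = 1`, `b₁ = a₂ + 1` and
`bᵢ = a_{i+1}` for `i ≥ 2`. Since an irrational number is the limit of its convergents, the first
case gives `{α} = {β}` and the second `{α} + {β} = 1`.
-/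

open GenContFract

section CompleteQuotients

variable {α : ℝ}

theorem cq_add (α : ℝ) (m : ℕ) : ∀ n, cq α (m + n) = cq (cq α m) n
  | 0 => rfl
  | n + 1 => by rw [← Nat.add_assoc, cq, cq, cq_add α m n]

theorem pq_add (α : ℝ) (m n : ℕ) : pq α (m + n) = pq (cq α m) n := by
  rw [pq, pq, cq_add]

theorem cq_add_intCast_succ (α : ℝ) (z : ℤ) (n : ℕ) : cq (α + z) (n + 1) = cq α (n + 1) := by
  have h₁ : cq (α + z) 1 = cq α 1 := by simp only [cq, Int.fract_add_intCast]
  rw [Nat.add_comm, cq_add, h₁, ← cq_add]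

theorem pq_zero_add_intCast (α : ℝ) (z : ℤ) : pq (α + z) 0 = pq α 0 + z :=
  Int.floor_add_intCast α z

theorem pq_add_intCast_succ (α : ℝ) (z : ℤ) (n : ℕ) : pq (α + z) (n + 1) = pq α (n + 1) := by
  rw [pq, pq, cq_add_intCast_succ]

theorem fract_cq (α : ℝ) (n : ℕ) : Int.fract (cq α n) = 1 / cq α (n + 1) := by
  rw [cq, one_div_one_div]

theorem cq_eq_pq_add (α : ℝ) (n : ℕ) : cq α n = pq α n + 1 / cq α (n + 1) := by
  rw [← fract_cq, pq, Int.floor_add_fract]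

theorem fract_ne_zero_of_irrational (hα : Irrational α) : Int.fract α ≠ 0 := by
  rw [← Int.self_sub_floor]
  exact (hα.sub_intCast _).ne_zero

theorem irrational_cq (hα : Irrational α) : ∀ n, Irrational (cq α n)
  | 0 => hα
  | n + 1 => by
    rw [cq, one_div, ← Int.self_sub_floor]
    exact ((irrational_cq hα n).sub_intCast _).inv

theorem one_lt_cq_succ (hα : Irrational α) (n : ℕ) : 1 < cq α (n + 1) := by
  have hpos := (Int.fract_nonneg _).lt_of_ne' (fract_ne_zero_of_irrational (irrational_cq hα n))
  exact (one_lt_div hpos).mpr (Int.fract_lt_one _)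

theorem one_le_pq (hα : Irrational α) {n : ℕ} (hn : 1 ≤ n) : 1 ≤ pq α n := by
  obtain ⟨m, rfl⟩ := Nat.exists_eq_add_of_le' hn
  exact Int.le_floor.mpr (by exact_mod_cast (one_lt_cq_succ hα m).le)

theorem intFractPair_stream_eq_some_cq (hα : Irrational α) :
    ∀ n, IntFractPair.stream α n = some (IntFractPair.of (cq α n))
  | 0 => IntFractPair.stream_zero α
  | n + 1 => by
    rw [IntFractPair.stream_succ_of_some (intFractPair_stream_eq_some_cq hα n)
      (fract_ne_zero_of_irrational (irrational_cq hα n))]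
    simp only [IntFractPair.of, cq, one_div]

theorem of_s_get?_eq_pq (hα : Irrational α) (n : ℕ) :
    (GenContFract.of α).s.get? n = some ⟨1, (pq α (n + 1) : ℝ)⟩ :=
  get?_of_eq_some_of_succ_get?_intFractPair_stream (intFractPair_stream_eq_some_cq hα (n + 1))

theorem eq_of_pq_eq {β : ℝ} (hα : Irrational α) (hβ : Irrational β) (h : ∀ n, pq α n = pq β n) :
    α = β := by
  have hof : GenContFract.of α = GenContFract.of β := by
    refine GenContFract.ext ?_ (Stream'.Seq.ext fun n => ?_)
    · rw [of_h_eq_floor, of_h_eq_floor]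
      exact congrArg Int.cast (h 0)
    · rw [of_s_get?_eq_pq hα, of_s_get?_eq_pq hβ, h]
  exact tendsto_nhds_unique (of_convergence α) (hof ▸ of_convergence β)

end CompleteQuotients

section ReversedQuotients

variable {α : ℝ}

theorem revq_zero (α : ℝ) : revq α 0 = 0 := by simp [revq, cfval]

theorem revq_succ (α : ℝ) (n : ℕ) : revq α (n + 1) = 1 / (pq α (n + 1) + revq α n) := by
  have hl : (List.range (n + 1)).map (fun i => (pq α (n + 1 - i) : ℝ))
      = (pq α (n + 1) : ℝ) :: (List.range n).map (fun i => (pq α (n - i) : ℝ)) := by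
    simp [List.range_succ_eq_map, Function.comp_def, Nat.succ_sub_succ]
  rw [revq, hl, cfval, revq]

theorem revq_mem_Icc (hα : Irrational α) : ∀ n, revq α n ∈ Set.Icc 0 1
  | 0 => by simp [revq_zero]
  | n + 1 => by
    have ha : (1 : ℝ) ≤ pq α (n + 1) := by exact_mod_cast one_le_pq hα n.succ_pos
    obtain ⟨hr, -⟩ := revq_mem_Icc hα n
    rw [revq_succ]
    exact ⟨by positivity, (div_le_one (by linarith)).mpr (by linarith)⟩

theorem revq_eq_zero_iff (hα : Irrational α) {n : ℕ} : revq α n = 0 ↔ n = 0 := by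
  refine ⟨fun h => ?_, fun h => h ▸ revq_zero α⟩
  obtain _ | m := n
  · rfl
  have ha : (1 : ℝ) ≤ pq α (m + 1) := by exact_mod_cast one_le_pq hα m.succ_pos
  have hr := (revq_mem_Icc hα m).1
  rw [revq_succ, one_div, inv_eq_zero] at h
  linarith

theorem revq_eq_one (hα : Irrational α) {n : ℕ} (h : revq α n = 1) : n = 1 ∧ pq α 1 = 1 := by
  obtain _ | m := n
  · simp [revq_zero] at h
  have ha : (1 : ℝ) ≤ pq α (m + 1) := by exact_mod_cast one_le_pq hα m.succ_pos
  have hr := (revq_mem_Icc hα m).1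
  rw [revq_succ, div_eq_one_iff_eq (by linarith)] at h
  have hr0 : revq α m = 0 := by linarith
  have hpq : (pq α (m + 1) : ℝ) = 1 := by linarith
  obtain rfl := (revq_eq_zero_iff hα).mp hr0
  exact ⟨rfl, by exact_mod_cast hpq⟩

end ReversedQuotients

theorem intCast_add_eq_intCast_add {a b : ℤ} {r s : ℝ} (hr : r ∈ Set.Icc 0 1)
    (hs : s ∈ Set.Icc 0 1) (h : a + r = b + s) :
    (a = b ∧ r = s) ∨ (r = 1 ∧ s = 0 ∧ b = a + 1) ∨ (r = 0 ∧ s = 1 ∧ a = b + 1) := by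
  obtain ⟨hr₀, hr₁⟩ := hr
  obtain ⟨hs₀, hs₁⟩ := hs
  have hlo : b - 1 ≤ a := by exact_mod_cast (by linarith : (b : ℝ) - 1 ≤ a)
  have hhi : a ≤ b + 1 := by exact_mod_cast (by linarith : (a : ℝ) ≤ b + 1)
  rcases (by omega : a = b ∨ b = a + 1 ∨ a = b + 1) with rfl | rfl | rfl <;> push_cast at h
  · exact Or.inl ⟨rfl, by linarith⟩
  · exact Or.inr (Or.inl ⟨by linarith, by linarith, rfl⟩)
  · exact Or.inr (Or.inr ⟨by linarith, by linarith, rfl⟩)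

theorem forall_or_forall_of_antitone {ι : Type*} [Preorder ι] [IsDirectedOrder ι] {P Q : ι → Prop}
    (hP : Antitone P) (hQ : Antitone Q) (h : ∀ i, P i ∨ Q i) : (∀ i, P i) ∨ ∀ i, Q i := by
  by_contra! ⟨⟨a, ha⟩, ⟨b, hb⟩⟩
  obtain ⟨c, hac, hbc⟩ := exists_ge_ge a b
  rcases h c with hc | hc
  · exact ha (hP hac hc)
  · exact hb (hQ hbc hc)

section PartialQuotientMatching

variable {α β : ℝ}

def SamePQUpTo (α β : ℝ) (N : ℕ) : Prop :=
  ∀ i, 1 ≤ i → i ≤ N → pq α i = pq β i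

/-- `a₁, …, a_{N+1}` is `1, c, a₃, …, a_{N+1}` and `b₁, …, b_N` is `c + 1, a₃, …, a_{N+1}`:
read backwards, these are the two expansions `[…, c, 1] = […, c + 1]` of one rational. -/
def ShiftedPQUpTo (α β : ℝ) (N : ℕ) : Prop :=
  pq α 1 = 1 ∧ pq β 1 = pq α 2 + 1 ∧ ∀ i, 2 ≤ i → i ≤ N → pq β i = pq α (i + 1)

theorem SamePQUpTo.antitone : Antitone (SamePQUpTo α β) :=
  fun _ _ hMN h i h₁ h₂ => h i h₁ (h₂.trans hMN)

theorem ShiftedPQUpTo.antitone : Antitone (ShiftedPQUpTo α β) :=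
  fun _ _ hMN ⟨h₁, h₂, h⟩ => ⟨h₁, h₂, fun i hi₁ hi₂ => h i hi₁ (hi₂.trans hMN)⟩

theorem SamePQUpTo.succ {N : ℕ} (h : SamePQUpTo α β N) (hN : pq α (N + 1) = pq β (N + 1)) :
    SamePQUpTo α β (N + 1) := by
  intro i hi₁ hi₂
  rcases hi₂.lt_or_eq with hi₂ | rfl
  exacts [h i hi₁ (Nat.le_of_lt_succ hi₂), hN]

theorem ShiftedPQUpTo.succ {N : ℕ} (h : ShiftedPQUpTo α β N)
    (hN : pq β (N + 1) = pq α (N + 2)) : ShiftedPQUpTo α β (N + 1) := by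
  obtain ⟨h₁, h₂, h⟩ := h
  refine ⟨h₁, h₂, fun i hi₁ hi₂ => ?_⟩
  rcases hi₂.lt_or_eq with hi₂ | rfl
  exacts [h i hi₁ (Nat.le_of_lt_succ hi₂), hN]

theorem samePQ_or_shiftedPQ_of_revq_eq (hα : Irrational α) (hβ : Irrational β) :
    ∀ {μ ν : ℕ}, revq α μ = revq β ν →
      (μ = ν ∧ SamePQUpTo α β μ) ∨ (μ = ν + 1 ∧ ShiftedPQUpTo α β ν) ∨
        (ν = μ + 1 ∧ ShiftedPQUpTo β α μ)
  | 0, ν, h => by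
    rw [revq_zero, eq_comm, revq_eq_zero_iff hβ] at h
    exact Or.inl ⟨h.symm, fun i h₁ h₂ => by omega⟩
  | m + 1, 0, h => by
    rw [revq_zero, revq_eq_zero_iff hα] at h
    exact absurd h m.succ_ne_zero
  | m + 1, k + 1, h => by
    rw [revq_succ, revq_succ, one_div, one_div, inv_inj] at h
    rcases intCast_add_eq_intCast_add (revq_mem_Icc hα m) (revq_mem_Icc hβ k) h with
      ⟨hab, hrs⟩ | ⟨hr, hs, hba⟩ | ⟨hr, hs, hab⟩
    · rcases samePQ_or_shiftedPQ_of_revq_eq hα hβ hrs with ⟨rfl, h'⟩ | ⟨rfl, h'⟩ | ⟨rfl, h'⟩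
      · exact Or.inl ⟨rfl, h'.succ hab⟩
      · exact Or.inr (Or.inl ⟨rfl, h'.succ hab.symm⟩)
      · exact Or.inr (Or.inr ⟨rfl, h'.succ hab⟩)
    · obtain ⟨rfl, h₁⟩ := revq_eq_one hα hr
      obtain rfl := (revq_eq_zero_iff hβ).mp hs
      exact Or.inr (Or.inl ⟨rfl, h₁, hba, fun i h₂ h₃ => by omega⟩)
    · obtain rfl := (revq_eq_zero_iff hα).mp hr
      obtain ⟨rfl, h₁⟩ := revq_eq_one hβ hs
      exact Or.inr (Or.inr ⟨rfl, h₁, hab, fun i h₂ h₃ => by omega⟩)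

theorem samePQ_or_shiftedPQ_of_infinite (hα : Irrational α) (hβ : Irrational β)
    (h : {p : ℕ × ℕ | revq α p.1 = revq β p.2}.Infinite) (N : ℕ) :
    SamePQUpTo α β N ∨ ShiftedPQUpTo α β N ∨ ShiftedPQUpTo β α N := by
  obtain ⟨p, hp, hN⟩ := h.exists_notMem_finset (Finset.range (N + 1) ×ˢ Finset.range (N + 1))
  simp only [Finset.mem_product, Finset.mem_range, not_and_or, not_lt] at hN
  rcases samePQ_or_shiftedPQ_of_revq_eq hα hβ hp with ⟨hμν, h'⟩ | ⟨hμν, h'⟩ | ⟨hμν, h'⟩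
  · exact Or.inl (SamePQUpTo.antitone (by omega) h')
  · exact Or.inr (Or.inl (ShiftedPQUpTo.antitone (by omega) h'))
  · exact Or.inr (Or.inr (ShiftedPQUpTo.antitone (by omega) h'))

end PartialQuotientMatching

section Conclusion

variable {α β : ℝ}

theorem exists_sub_eq_intCast_of_samePQ (hα : Irrational α) (hβ : Irrational β)
    (h : ∀ N, SamePQUpTo α β N) : ∃ z : ℤ, α - β = z := by
  have hcq : cq α 1 = cq β 1 :=
    eq_of_pq_eq (irrational_cq hα 1) (irrational_cq hβ 1) fun n => by
      rw [← pq_add, ← pq_add]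
      exact h (1 + n) (1 + n) (by omega) le_rfl
  rw [← Int.fract_eq_fract]
  calc Int.fract α = 1 / cq α 1 := fract_cq α 0
    _ = Int.fract β := by rw [hcq]; exact (fract_cq β 0).symm

theorem exists_add_eq_intCast_of_shiftedPQ (hα : Irrational α) (hβ : Irrational β)
    (h : ∀ N, ShiftedPQUpTo α β N) : ∃ z : ℤ, α + β = z := by
  obtain ⟨h₁, h₂, -⟩ := h 0
  set c := cq α 2
  have hc : 1 < c := one_lt_cq_succ hα 1
  have hcqβ : cq β 1 = c + (1 : ℤ) := by
    refine eq_of_pq_eq (irrational_cq hβ 1) ((irrational_cq hα 2).add_intCast 1) fun n => ?_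
    obtain _ | n := n
    · rw [pq_zero_add_intCast, ← pq_add, ← pq_add]
      exact h₂
    · rw [pq_add_intCast_succ, ← pq_add, ← pq_add,
        (h (n + 2)).2.2 (1 + (n + 1)) (by omega) (by omega)]
      congr 1
      omega
  have hcqα : cq α 1 = 1 + 1 / c := by
    rw [cq_eq_pq_add α 1, h₁, Int.cast_one]
  have hfract : Int.fract α + Int.fract β = 1 := by
    rw [show Int.fract α = 1 / cq α 1 from fract_cq α 0,
      show Int.fract β = 1 / cq β 1 from fract_cq β 0, hcqα, hcqβ, Int.cast_one]
    field_simp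
  rw [← sub_neg_eq_add, ← Int.fract_eq_fract, Int.fract_neg (fract_ne_zero_of_irrational hβ)]
  linarith

end Conclusion

theorem stmt15 (α β : ℝ) (hα : Irrational α) (hβ : Irrational β)
    (h : {p : ℕ × ℕ | 1 ≤ p.1 ∧ 1 ≤ p.2 ∧ revq α p.1 = revq β p.2}.Infinite) :
    (∃ z : ℤ, α + β = (z : ℝ)) ∨ (∃ z : ℤ, α - β = (z : ℝ)) := by
  have hmatch := samePQ_or_shiftedPQ_of_infinite hα hβ (h.mono fun p hp => hp.2.2)
  rcases forall_or_forall_of_antitone SamePQUpTo.antitone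
      (fun _ _ hMN => Or.imp (ShiftedPQUpTo.antitone hMN) (ShiftedPQUpTo.antitone hMN)) hmatch
    with hsame | hshifted
  · exact Or.inr (exists_sub_eq_intCast_of_samePQ hα hβ hsame)
  rcases forall_or_forall_of_antitone ShiftedPQUpTo.antitone ShiftedPQUpTo.antitone hshifted with
    hαβ | hβα
  · exact Or.inl (exists_add_eq_intCast_of_shiftedPQ hα hβ hαβ)
  · obtain ⟨z, hz⟩ := exists_add_eq_intCast_of_shiftedPQ hβ hα hβα
    exact Or.inl ⟨z, by rw [add_comm, hz]⟩
end
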